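/- Let Q be a quiver of type A_n, A = A^ρ its centrally extended preprojective algebra with central generator z, e_n the idempotent at an end vertex of the Dynkin diagram, and B_n = e_n A e_n. Then B_n is a commutative algebra isomorphic to C[z]/(z^n); in particular dim B_n = n. -/

import Mathlib

/-- Generators for the centrally extended preprojective algebra of the `A_n` quiver:
vertex idempotents `v i`, arrows `x k : k → k+1`, reverse arrows `y k : k+1 → k`,
and the central generator `z`. -/
inductive PGen (n : ℕ) : Type
  | v : Fin n → PGen n
  | x : Fin (n - 1) → PGen n
  | y : Fin (n - 1) → PGen n
  | z : PGen n

open FreeAlgebra in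
/-- The defining relations of the centrally extended preprojective algebra `A = A^ρ` of
the `A_n` quiver: the `e i := v i` are orthogonal idempotents summing to `1`, `z` is
central, each arrow `x k` (resp. `y k`) is a path from vertex `k` to `k+1` (resp. from
`k+1` to `k`) — here `k ≤ n-2` is embedded in `Fin n` via `castLE` and `k+1` via the
successor — and the centrally extended preprojective relation
`∑_k [x k, y k] = z` (the weight `μ = ρ`). -/
inductive PRel (n : ℕ) (hn : 1 ≤ n) :
    FreeAlgebra ℂ (PGen n) → FreeAlgebra ℂ (PGen n) → Prop
  | idem (i j : Fin n) : PRel n hn (ι ℂ (PGen.v i) * ι ℂ (PGen.v j))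
      (if i = j then ι ℂ (PGen.v i) else 0)
  | total : PRel n hn (∑ i : Fin n, ι ℂ (PGen.v i)) 1
  | central (g : PGen n) : PRel n hn (ι ℂ (PGen.z) * ι ℂ g) (ι ℂ g * ι ℂ (PGen.z))
  | xpath (k : Fin (n - 1)) : PRel n hn (ι ℂ (PGen.x k))
      (ι ℂ (PGen.v ⟨k.1 + 1, by omega⟩) * ι ℂ (PGen.x k) * ι ℂ (PGen.v ⟨k.1, by omega⟩))
  | ypath (k : Fin (n - 1)) : PRel n hn (ι ℂ (PGen.y k))
      (ι ℂ (PGen.v ⟨k.1, by omega⟩) * ι ℂ (PGen.y k) * ι ℂ (PGen.v ⟨k.1 + 1, by omega⟩))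
  | preproj : PRel n hn
      (∑ k : Fin (n - 1),
        (ι ℂ (PGen.x k) * ι ℂ (PGen.y k) - ι ℂ (PGen.y k) * ι ℂ (PGen.x k)))
      (ι ℂ (PGen.z))

/-- The centrally extended preprojective algebra `A = A^ρ` of the `A_n` quiver. -/
abbrev CEPA (n : ℕ) (hn : 1 ≤ n) := RingQuot (PRel n hn)

/-!
Let `P_k = y_k y_{k+1} ⋯ y_{n-2}` be the path from the end vertex `n - 1` down to `k`. At the
end vertex the preprojective relation reads `x_{n-2} y_{n-2} = z e_{n-1}`, and descending
induction on `k` gives `x_k P_k = (n - k - 1) z P_{k+1}`. So the span of the `z ^ j P_k` is a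
left ideal; it contains `e_{n-1} = P_{n-1}`, so the corner `e_{n-1} A e_{n-1}` is spanned by the
`z ^ j e_{n-1}`. Ascending induction, starting from `z e_0 = -y_0 x_0`, gives `z ^ (k+1) P_k = 0`;
in particular `z ^ n e_{n-1} = 0`. Finally, writing the left module `A e_{n-1}` in the basis
`z ^ m P_k` (`m ≤ k`) gives an explicit representation of `A` in which the coefficients of `p` in
degrees `< n` can be read off from `p(z) e_{n-1}`, so `p ↦ p(z) e_{n-1}` has kernel `(X ^ n)`.
-/

namespace CEPA

open FreeAlgebra Polynomial

variable {n : ℕ} (hn : 1 ≤ n)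

/-! ### Generators and relations -/

noncomputable abbrev gen (g : PGen n) : CEPA n hn := RingQuot.mkAlgHom ℂ (PRel n hn) (ι ℂ g)

-- Generators are indexed by `ℕ` and set to `0` off the quiver, so that most relations below
-- hold without side conditions.
noncomputable def e (i : ℕ) : CEPA n hn := if h : i < n then gen hn (.v ⟨i, h⟩) else 0

noncomputable def x (k : ℕ) : CEPA n hn := if h : k < n - 1 then gen hn (.x ⟨k, h⟩) else 0

noncomputable def y (k : ℕ) : CEPA n hn := if h : k < n - 1 then gen hn (.y ⟨k, h⟩) else 0

noncomputable def z : CEPA n hn := gen hn .z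

variable {hn}

@[elab_as_elim]
theorem induction_on {P : CEPA n hn → Prop} (a : CEPA n hn)
    (algebraMap : ∀ r : ℂ, P (algebraMap ℂ _ r)) (gen : ∀ g, P (gen hn g))
    (add : ∀ a b, P a → P b → P (a + b)) (mul : ∀ a b, P a → P b → P (a * b)) : P a := by
  obtain ⟨w, rfl⟩ := RingQuot.mkAlgHom_surjective ℂ (PRel n hn) a
  induction w using FreeAlgebra.induction with
  | grade0 r => simpa only [AlgHom.commutes] using algebraMap r
  | grade1 g => exact gen g
  | mul u w hu hw => simpa only [map_mul] using mul _ _ hu hw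
  | add u w hu hw => simpa only [map_add] using add _ _ hu hw

theorem gen_v (i : Fin n) : gen hn (.v i) = e hn i := by
  simp [e, i.2]

theorem gen_x (k : Fin (n - 1)) : gen hn (.x k) = x hn k := by
  simp [x, k.2]

theorem gen_y (k : Fin (n - 1)) : gen hn (.y k) = y hn k := by
  simp [y, k.2]

theorem e_eq_zero {i : ℕ} (h : n ≤ i) : e hn i = 0 := dif_neg (by omega)

theorem x_eq_zero {k : ℕ} (h : n - 1 ≤ k) : x hn k = 0 := dif_neg (by omega)

theorem y_eq_zero {k : ℕ} (h : n - 1 ≤ k) : y hn k = 0 := dif_neg (by omega)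

theorem commute_z (a : CEPA n hn) : Commute (z hn) a := by
  induction a using induction_on with
  | algebraMap r => exact (Algebra.commutes r _).symm
  | gen g =>
    show z hn * gen hn g = gen hn g * z hn
    simpa only [z, gen, map_mul] using RingQuot.mkAlgHom_rel ℂ (PRel.central (hn := hn) g)
  | add a b ha hb => exact ha.add_right hb
  | mul a b ha hb => exact ha.mul_right hb

theorem e_mul_e (i j : ℕ) : e hn i * e hn j = if i = j then e hn i else 0 := by
  by_cases hi : i < n
  · by_cases hj : j < n
    · simp only [e, gen, dif_pos hi, dif_pos hj]
      rw [← map_mul, RingQuot.mkAlgHom_rel ℂ (PRel.idem ⟨i, hi⟩ ⟨j, hj⟩)]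
      split_ifs <;> simp_all
    · rw [e_eq_zero (hn := hn) (not_lt.1 hj), mul_zero, if_neg (by omega)]
  · rw [e_eq_zero (not_lt.1 hi), zero_mul, ite_self]

theorem x_eq_e_mul_x_mul_e (k : ℕ) : x hn k = e hn (k + 1) * x hn k * e hn k := by
  by_cases hk : k < n - 1
  · simpa only [x, e, gen, hk, dif_pos, show k < n by omega, show k + 1 < n by omega, map_mul]
      using RingQuot.mkAlgHom_rel ℂ (PRel.xpath (hn := hn) ⟨k, hk⟩)
  · simp [x_eq_zero (not_lt.1 hk)]

theorem y_eq_e_mul_y_mul_e (k : ℕ) : y hn k = e hn k * y hn k * e hn (k + 1) := by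
  by_cases hk : k < n - 1
  · simpa only [y, e, gen, hk, dif_pos, show k < n by omega, show k + 1 < n by omega, map_mul]
      using RingQuot.mkAlgHom_rel ℂ (PRel.ypath (hn := hn) ⟨k, hk⟩)
  · simp [y_eq_zero (not_lt.1 hk)]

theorem x_mul_e (k j : ℕ) : x hn k * e hn j = if j = k then x hn k else 0 := by
  rw [x_eq_e_mul_x_mul_e k, mul_assoc _ (e hn k), e_mul_e]
  split_ifs <;> simp_all

theorem e_mul_y (i k : ℕ) : e hn i * y hn k = if i = k then y hn k else 0 := by
  rw [y_eq_e_mul_y_mul_e k, ← mul_assoc, ← mul_assoc, e_mul_e]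
  split_ifs <;> simp_all

theorem y_mul_e (k j : ℕ) : y hn k * e hn j = if j = k + 1 then y hn k else 0 := by
  rw [y_eq_e_mul_y_mul_e k, mul_assoc _ (e hn (k + 1)), e_mul_e]
  split_ifs <;> simp_all

theorem z_mul_e_eq_sum (v : ℕ) : z hn * e hn v =
    ∑ k ∈ Finset.range (n - 1), (x hn k * y hn k * e hn v - y hn k * x hn k * e hn v) := by
  have h := RingQuot.mkAlgHom_rel ℂ (PRel.preproj (hn := hn))
  simp only [map_sum, map_sub, map_mul, gen_x, gen_y] at h
  rw [← Fin.sum_univ_eq_sum_range (fun k => x hn k * y hn k * e hn v - y hn k * x hn k * e hn v)]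
  simp only [← sub_mul, ← Finset.sum_mul]
  rw [h]
  rfl

theorem x_mul_y (k : ℕ) :
    x hn k * y hn k = z hn * e hn (k + 1) + y hn (k + 1) * x hn (k + 1) := by
  rw [z_mul_e_eq_sum]
  simp only [mul_assoc, y_mul_e, x_mul_e, mul_ite, mul_zero, Finset.sum_sub_distrib,
    add_left_inj, Finset.sum_ite_eq, Finset.mem_range]
  split_ifs
  all_goals simp_all [x_eq_zero, y_eq_zero]

theorem z_mul_e_zero : z hn * e hn 0 = -(y hn 0 * x hn 0) := by
  rw [z_mul_e_eq_sum]
  simp only [mul_assoc, y_mul_e, x_mul_e, mul_ite, mul_zero, (Nat.succ_ne_zero _).symm,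
    if_false, zero_sub, Finset.sum_neg_distrib, Finset.sum_ite_eq, Finset.mem_range]
  split_ifs with h
  · rfl
  · simp [y_eq_zero (not_lt.1 h)]

/-! ### Paths from the end vertex -/

variable (hn) in
noncomputable def downPath (k : ℕ) : CEPA n hn :=
  if k + 1 < n then y hn k * downPath (k + 1) else e hn k
termination_by n - k

theorem downPath_of_lt {k : ℕ} (hk : k + 1 < n) :
    downPath hn k = y hn k * downPath hn (k + 1) := by
  rw [downPath, if_pos hk]

theorem downPath_top : downPath hn (n - 1) = e hn (n - 1) := by
  rw [downPath, if_neg (by omega)]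

theorem downPath_eq_zero {k : ℕ} (hk : n ≤ k) : downPath hn k = 0 := by
  rw [downPath, if_neg (by omega), e_eq_zero hk]

theorem e_mul_downPath (i k : ℕ) :
    e hn i * downPath hn k = if i = k then downPath hn k else 0 := by
  by_cases hk : k + 1 < n
  · rw [downPath_of_lt hk, ← mul_assoc, e_mul_y, ite_mul, zero_mul]
  · rw [downPath, if_neg hk, e_mul_e]
    split_ifs with h <;> simp [h]

theorem y_mul_downPath (k j : ℕ) :
    y hn k * downPath hn j = if j = k + 1 ∧ j < n then downPath hn k else 0 := by
  split_ifs with h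
  · obtain ⟨rfl, hj⟩ := h
    exact (downPath_of_lt hj).symm
  · by_cases hj : j = k + 1
    · rw [downPath_eq_zero (by omega), mul_zero]
    · rw [← (y_mul_e k (k + 1)).trans (if_pos rfl), mul_assoc, e_mul_downPath,
        if_neg (Ne.symm hj), mul_zero]

theorem x_mul_downPath_eq_add {k : ℕ} (hk : k + 1 < n) : x hn k * downPath hn k =
    z hn * downPath hn (k + 1) + y hn (k + 1) * (x hn (k + 1) * downPath hn (k + 1)) := by
  rw [downPath_of_lt hk, ← mul_assoc, x_mul_y, add_mul, mul_assoc, e_mul_downPath, if_pos rfl,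
    mul_assoc]

mutual

theorem x_mul_downPath (k : ℕ) :
    x hn k * downPath hn k = ((n : ℂ) - (k + 1)) • (z hn * downPath hn (k + 1)) := by
  by_cases hk : k + 1 < n
  · rw [x_mul_downPath_eq_add hk, y_mul_x_mul_downPath (k + 1)]
    push_cast
    module
  · rw [x_eq_zero (k := k) (by omega), downPath_eq_zero (k := k + 1) (by omega), zero_mul,
      mul_zero, smul_zero]
termination_by (n - k, 0)

theorem y_mul_x_mul_downPath (k : ℕ) :
    y hn k * (x hn k * downPath hn k) = ((n : ℂ) - (k + 1)) • (z hn * downPath hn k) := by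
  by_cases hk : k + 1 < n
  · rw [x_mul_downPath k, mul_smul_comm, ← mul_assoc, ← (commute_z _).eq, mul_assoc,
      ← downPath_of_lt hk]
  · rw [y_eq_zero (by omega), zero_mul]
    rcases (show k + 1 = n ∨ n ≤ k by omega) with h | h
    · have hc : (n : ℂ) = k + 1 := by exact_mod_cast h.symm
      rw [hc, sub_self, zero_smul]
    · rw [downPath_eq_zero h, mul_zero, smul_zero]
termination_by (n - k, 1)

end

theorem z_pow_succ_mul_downPath (k : ℕ) : z hn ^ (k + 1) * downPath hn k = 0 := by
  induction k with
  | zero =>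
    have h : (n : ℂ) • (z hn * downPath hn 0) = 0 := calc
      (n : ℂ) • (z hn * downPath hn 0)
        = z hn * downPath hn 0 + ((n : ℂ) - (0 + 1)) • (z hn * downPath hn 0) := by module
      _ = z hn * e hn 0 * downPath hn 0 + y hn 0 * (x hn 0 * downPath hn 0) := by
        rw [mul_assoc, e_mul_downPath, if_pos rfl, y_mul_x_mul_downPath, Nat.cast_zero]
      _ = 0 := by rw [← mul_assoc (y hn 0), ← add_mul, z_mul_e_zero, neg_add_cancel, zero_mul]
    rw [pow_one]
    exact (smul_eq_zero.1 h).resolve_left (Nat.cast_ne_zero.2 (by omega))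
  | succ k ih =>
    by_cases hk : k + 1 < n
    · have h : ((n : ℂ) - (k + 1)) • (z hn ^ (k + 2) * downPath hn (k + 1)) = 0 := by
        rw [pow_succ, mul_assoc, ← mul_smul_comm, ← x_mul_downPath, ← mul_assoc,
          ((commute_z _).pow_left _).eq, mul_assoc, ih, mul_zero]
      refine (smul_eq_zero.1 h).resolve_left (sub_ne_zero.2 ?_)
      exact_mod_cast (show n ≠ k + 1 by omega)
    · rw [downPath_eq_zero (by omega), mul_zero]

theorem z_pow_mul_e_top : z hn ^ n * e hn (n - 1) = 0 := by
  simpa only [downPath_top, Nat.sub_add_cancel hn] using z_pow_succ_mul_downPath (hn := hn) (n - 1)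

/-! ### The corner algebra -/

variable (hn) in
noncomputable def pathSpan : Submodule ℂ (CEPA n hn) :=
  Submodule.span ℂ (Set.range fun p : ℕ × ℕ => z hn ^ p.1 * downPath hn p.2)

theorem z_pow_mul_downPath_mem_pathSpan (j k : ℕ) : z hn ^ j * downPath hn k ∈ pathSpan hn :=
  Submodule.subset_span ⟨(j, k), rfl⟩

theorem downPath_mem_pathSpan (k : ℕ) : downPath hn k ∈ pathSpan hn := by
  simpa using z_pow_mul_downPath_mem_pathSpan (hn := hn) 0 k

theorem z_pow_mul_mem_pathSpan (j : ℕ) {w : CEPA n hn} (hw : w ∈ pathSpan hn) :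
    z hn ^ j * w ∈ pathSpan hn := by
  refine (Submodule.span_le (p := (pathSpan hn).comap (LinearMap.mulLeft ℂ (z hn ^ j)))).2 ?_ hw
  rintro _ ⟨⟨i, k⟩, rfl⟩
  show z hn ^ j * (z hn ^ i * downPath hn k) ∈ pathSpan hn
  rw [← mul_assoc, ← pow_add]
  exact z_pow_mul_downPath_mem_pathSpan _ _

theorem gen_mul_downPath_mem_pathSpan (g : PGen n) (k : ℕ) :
    gen hn g * downPath hn k ∈ pathSpan hn := by
  cases g with
  | v i =>
    rw [gen_v, e_mul_downPath]
    split_ifs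
    exacts [downPath_mem_pathSpan k, zero_mem _]
  | x i =>
    rw [gen_x]
    by_cases h : k = i
    · rw [h, x_mul_downPath]
      exact Submodule.smul_mem _ _ (by simpa using z_pow_mul_downPath_mem_pathSpan 1 (i + 1))
    · rw [← (x_mul_e (hn := hn) i i).trans (if_pos rfl), mul_assoc, e_mul_downPath,
        if_neg (Ne.symm h), mul_zero]
      exact zero_mem _
  | y i =>
    rw [gen_y, y_mul_downPath]
    split_ifs
    exacts [downPath_mem_pathSpan _, zero_mem _]
  | z =>
    show z hn * downPath hn k ∈ pathSpan hn
    simpa using z_pow_mul_downPath_mem_pathSpan (hn := hn) 1 k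

theorem mul_mem_pathSpan (a : CEPA n hn) {w : CEPA n hn} (hw : w ∈ pathSpan hn) :
    a * w ∈ pathSpan hn := by
  induction a using induction_on generalizing w with
  | algebraMap r =>
    rw [← Algebra.smul_def]
    exact Submodule.smul_mem _ r hw
  | gen g =>
    refine (Submodule.span_le (p := (pathSpan hn).comap (LinearMap.mulLeft ℂ (gen hn g)))).2
      ?_ hw
    rintro _ ⟨⟨j, k⟩, rfl⟩
    show gen hn g * (z hn ^ j * downPath hn k) ∈ pathSpan hn
    rw [← mul_assoc, ← ((commute_z _).pow_left j).eq, mul_assoc]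
    exact z_pow_mul_mem_pathSpan j (gen_mul_downPath_mem_pathSpan g k)
  | add a b ha hb =>
    rw [add_mul]
    exact add_mem (ha hw) (hb hw)
  | mul a b ha hb =>
    rw [mul_assoc]
    exact ha (hb hw)

variable (hn) in
noncomputable def corner : CEPA n hn →ₗ[ℂ] CEPA n hn :=
  LinearMap.mulLeft ℂ (e hn (n - 1)) ∘ₗ LinearMap.mulRight ℂ (e hn (n - 1))

variable (hn) in
noncomputable def cornerPoly : ℂ[X] →ₗ[ℂ] CEPA n hn :=
  LinearMap.mulRight ℂ (e hn (n - 1)) ∘ₗ (aeval (z hn)).toLinearMap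

theorem cornerPoly_apply (p : ℂ[X]) : cornerPoly hn p = aeval (z hn) p * e hn (n - 1) := rfl

theorem commute_aeval_z (p : ℂ[X]) (a : CEPA n hn) : Commute (aeval (z hn) p) a := by
  induction p using Polynomial.induction_on' with
  | add p q hp hq => simpa only [map_add] using hp.add_left hq
  | monomial j c =>
    rw [aeval_monomial]
    exact (Algebra.commute_algebraMap_left c a).mul_left ((commute_z a).pow_left j)

theorem e_top_mul_cornerPoly (p : ℂ[X]) : e hn (n - 1) * cornerPoly hn p = cornerPoly hn p := by
  rw [cornerPoly_apply, ← mul_assoc, ← (commute_aeval_z p _).eq, mul_assoc, e_mul_e, if_pos rfl]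

theorem cornerPoly_mul (p q : ℂ[X]) :
    cornerPoly hn (p * q) = cornerPoly hn p * cornerPoly hn q := by
  rw [cornerPoly_apply p, mul_assoc, e_top_mul_cornerPoly, cornerPoly_apply, cornerPoly_apply,
    map_mul, mul_assoc]

theorem e_top_mul_mem_range_cornerPoly {w : CEPA n hn} (hw : w ∈ pathSpan hn) :
    e hn (n - 1) * w ∈ LinearMap.range (cornerPoly hn) := by
  refine (Submodule.span_le (p := (LinearMap.range (cornerPoly hn)).comap
    (LinearMap.mulLeft ℂ (e hn (n - 1))))).2 ?_ hw
  rintro _ ⟨⟨j, k⟩, rfl⟩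
  show e hn (n - 1) * (z hn ^ j * downPath hn k) ∈ LinearMap.range (cornerPoly hn)
  rw [← mul_assoc, ← ((commute_z _).pow_left j).eq, mul_assoc, e_mul_downPath]
  split_ifs with h
  · exact ⟨X ^ j, by rw [cornerPoly_apply, map_pow, aeval_X, ← h, downPath_top]⟩
  · rw [mul_zero]
    exact zero_mem _

theorem range_cornerPoly : LinearMap.range (cornerPoly hn) = LinearMap.range (corner hn) := by
  apply le_antisymm
  · rintro _ ⟨p, rfl⟩
    exact ⟨aeval (z hn) p, e_top_mul_cornerPoly p⟩
  · rintro _ ⟨a, rfl⟩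
    have ha : a * e hn (n - 1) ∈ pathSpan hn := by
      simpa only [downPath_top] using mul_mem_pathSpan a (downPath_mem_pathSpan (hn := hn) (n - 1))
    exact e_top_mul_mem_range_cornerPoly ha

/-! ### A representation separating the powers of `z` -/

noncomputable def shiftOp (P : Fin n → ℕ → Prop) [∀ i d, Decidable (P i d)] (c : ℂ)
    (s : Fin n → Fin n) (t : ℕ → ℕ) : Module.End ℂ (Fin n → ℕ → ℂ) where
  toFun v i d := if P i d then c * v (s i) (t d) else 0
  map_add' u v := by
    ext i d
    split_ifs <;> simp [mul_add, *]
  map_smul' a v := by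
    ext i d
    split_ifs <;> simp [*, mul_left_comm]

@[simp]
theorem shiftOp_apply (P : Fin n → ℕ → Prop) [∀ i d, Decidable (P i d)] (c : ℂ)
    (s : Fin n → Fin n) (t : ℕ → ℕ) (v : Fin n → ℕ → ℂ) (i : Fin n) (d : ℕ) :
    shiftOp P c s t v i d = if P i d then c * v (s i) (t d) else 0 := rfl

-- The action of `A` on `A e_{n-1}`, where `v i d` is the coordinate along
-- `z ^ (i - d) * downPath i` (`d ≤ i`); for instance `x_k` maps `z ^ (k - d) * downPath k` to
-- `(n - k - 1) z ^ (k + 1 - d) * downPath (k + 1)`.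
noncomputable def repGen : PGen n → Module.End ℂ (Fin n → ℕ → ℂ)
  | .v p => shiftOp (fun i _ => i = p) 1 id id
  | .z => shiftOp (fun i d => d < i.1) 1 id (· + 1)
  | .x k => shiftOp (fun i d => i.1 = k.1 + 1 ∧ d ≤ k.1) ((n : ℂ) - (k.1 + 1))
      (fun _ => ⟨k.1, Nat.lt_of_lt_pred k.2⟩) id
  | .y k => shiftOp (fun i d => i.1 = k.1 ∧ d ≤ k.1) 1
      (fun _ => ⟨k.1 + 1, Nat.add_lt_of_lt_sub k.2⟩) (· + 1)

theorem repGen_preproj : ∑ k : Fin (n - 1), (repGen (.x k) * repGen (.y k) -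
    repGen (.y k) * repGen (.x k)) = repGen (n := n) .z := by
  refine LinearMap.ext fun v => funext fun i => funext fun d => ?_
  simp only [LinearMap.sum_apply, Finset.sum_apply, LinearMap.sub_apply, Pi.sub_apply,
    Module.End.mul_apply, repGen, shiftOp_apply]
  obtain ⟨i, hi⟩ := i
  calc _ = ∑ k : Fin (n - 1),
        ((if i = k.1 + 1 ∧ d < i then ((n : ℂ) - i) * v ⟨i, hi⟩ (d + 1) else 0) -
          (if i = k.1 ∧ d < i then ((n : ℂ) - (i + 1)) * v ⟨i, hi⟩ (d + 1) else 0)) :=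
        Finset.sum_congr rfl fun k _ => by split_ifs <;> simp_all <;> omega
    _ = _ := by
      rw [Finset.sum_sub_distrib,
        Fin.sum_univ_eq_sum_range (fun k => if i = k + 1 ∧ d < i then _ else 0),
        Fin.sum_univ_eq_sum_range (fun k => if i = k ∧ d < i then _ else 0)]
      by_cases hd : d < i
      · obtain ⟨j, rfl⟩ : ∃ j, i = j + 1 := ⟨i - 1, by omega⟩
        simp only [hd, and_true, add_left_inj, Finset.sum_ite_eq, Finset.mem_range, one_mul,
          if_true, show j < n - 1 by omega, id_eq]
        split_ifs with h
        · push_cast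
          ring
        · have hj : (n : ℂ) = j + 1 + 1 := by exact_mod_cast (show n = j + 1 + 1 by omega)
          rw [hj]
          push_cast
          ring
      · simp [hd]

theorem repGen_rel ⦃a b : FreeAlgebra ℂ (PGen n)⦄ (h : PRel n hn a b) :
    FreeAlgebra.lift ℂ repGen a = FreeAlgebra.lift ℂ repGen b := by
  cases h with
  | idem i j =>
    refine LinearMap.ext fun v => funext fun i' => funext fun d => ?_
    simp only [map_mul, apply_ite, map_zero, lift_ι_apply, repGen, Module.End.mul_apply]
    split_ifs <;> simp_all
  | total =>
    refine LinearMap.ext fun v => funext fun i => funext fun d => ?_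
    simp [repGen, LinearMap.sum_apply, Finset.sum_apply]
  | central g =>
    refine LinearMap.ext fun v => funext fun i => funext fun d => ?_
    cases g <;> simp only [map_mul, lift_ι_apply, repGen, Module.End.mul_apply, shiftOp_apply] <;>
      split_ifs <;> simp_all [Fin.ext_iff] <;> omega
  | xpath k =>
    refine LinearMap.ext fun v => funext fun i => funext fun d => ?_
    simp only [map_mul, lift_ι_apply, repGen, Module.End.mul_apply, shiftOp_apply]
    split_ifs <;> simp_all [Fin.ext_iff]
    omega
  | ypath k =>
    refine LinearMap.ext fun v => funext fun i => funext fun d => ?_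
    simp only [map_mul, lift_ι_apply, repGen, Module.End.mul_apply, shiftOp_apply]
    split_ifs <;> simp_all [Fin.ext_iff]
    omega
  | preproj => simpa only [map_sum, map_sub, map_mul, lift_ι_apply] using repGen_preproj

variable (hn) in
noncomputable def rep : CEPA n hn →ₐ[ℂ] Module.End ℂ (Fin n → ℕ → ℂ) :=
  RingQuot.liftAlgHom ℂ ⟨FreeAlgebra.lift ℂ repGen, repGen_rel⟩

theorem rep_gen (g : PGen n) : rep hn (gen hn g) = repGen g := by
  rw [rep, gen, RingQuot.liftAlgHom_mkAlgHom_apply, lift_ι_apply]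

theorem repGen_z_pow_apply (m : ℕ) (v : Fin n → ℕ → ℂ) (i : Fin n) {d : ℕ} (hd : d ≤ i) :
    (repGen PGen.z ^ m) v i d = if d + m ≤ i then v i (d + m) else 0 := by
  induction m generalizing d with
  | zero => simp [hd]
  | succ m ih =>
    rw [pow_succ', Module.End.mul_apply]
    show (if d < i.1 then 1 * (repGen PGen.z ^ m) v i (d + 1) else 0) = _
    split_ifs with h₁
    · rw [one_mul, ih h₁, if_pos (by omega)]
      congr 1
      omega
    · rw [one_mul, ih h₁, if_neg (by omega)]
    · omega
    · rfl

variable (hn) in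
def topVertex : Fin n := ⟨n - 1, Nat.sub_one_lt_of_lt hn⟩

variable (hn) in
noncomputable def topCoeff (j : ℕ) : CEPA n hn →ₗ[ℂ] ℂ where
  toFun a := rep hn a (Pi.single (topVertex hn) (Pi.single j 1)) (topVertex hn) 0
  map_add' a b := by simp
  map_smul' c a := by simp

theorem topCoeff_z_pow_mul_e_top (m : ℕ) {j : ℕ} (hj : j < n) :
    topCoeff hn j (z hn ^ m * e hn (n - 1)) = if m = j then 1 else 0 := by
  have he : e hn (n - 1) = gen hn (.v (topVertex hn)) := by rw [gen_v, topVertex]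
  simp only [topCoeff, LinearMap.coe_mk, AddHom.coe_mk, he, z, map_mul, map_pow, rep_gen,
    Module.End.mul_apply, repGen_z_pow_apply _ _ _ (Nat.zero_le _), zero_add]
  simp only [repGen, shiftOp_apply, if_true, id_eq, one_mul, Pi.single_eq_same, Pi.single_apply]
  have htop : (topVertex hn : ℕ) = n - 1 := rfl
  split_ifs <;> first | rfl | omega

theorem topCoeff_cornerPoly (p : ℂ[X]) {j : ℕ} (hj : j < n) :
    topCoeff hn j (cornerPoly hn p) = p.coeff j := by
  induction p using Polynomial.induction_on' with
  | add p q hp hq => rw [map_add, map_add, hp, hq, coeff_add]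
  | monomial m c =>
    rw [cornerPoly_apply, aeval_monomial, mul_assoc, ← Algebra.smul_def, map_smul,
      topCoeff_z_pow_mul_e_top m hj, coeff_monomial, smul_eq_mul, mul_ite, mul_one, mul_zero]

theorem ker_cornerPoly :
    LinearMap.ker (cornerPoly hn) = (Ideal.span {X ^ n}).restrictScalars ℂ := by
  ext p
  rw [LinearMap.mem_ker, Submodule.restrictScalars_mem, Ideal.mem_span_singleton]
  constructor
  · intro hp
    exact X_pow_dvd_iff.2 fun j hj => by rw [← topCoeff_cornerPoly p hj, hp, map_zero]
  · rintro ⟨q, rfl⟩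
    rw [cornerPoly_apply, map_mul, map_pow, aeval_X, mul_assoc, (commute_aeval_z q _).eq,
      ← mul_assoc, z_pow_mul_e_top, zero_mul]

theorem finrank_range_cornerPoly : Module.finrank ℂ (LinearMap.range (cornerPoly hn)) = n := by
  rw [← (cornerPoly hn).quotKerEquivRange.finrank_eq, ker_cornerPoly,
    (Submodule.Quotient.restrictScalarsEquiv ℂ _).finrank_eq, finrank_quotient_span_eq_natDegree,
    natDegree_X_pow]

end CEPA

/-- let `A = A^ρ` be the centrally extended preprojective algebra of the
`A_n` quiver, `e_n` the idempotent at the end vertex `n`, and `B_n = e_n A e_n` the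
corner algebra (the range of `x ↦ e_n x e_n`, with unit `e_n`).  Then `B_n` is a
commutative algebra isomorphic to `ℂ[z]/(z^n)`: there is a multiplicative `ℂ`-linear map
`ψ : ℂ[X] → A` with `ψ 1 = e_n`, `ψ X = z e_n`, range `B_n`, and kernel the ideal
`(X^n)`; in particular `dim B_n = n`. -/
theorem corner_algebra_of_typeA (n : ℕ) (hn : 1 ≤ n) :
    let A := CEPA n hn
    let e : Fin n → A := fun i => RingQuot.mkAlgHom ℂ (PRel n hn) (FreeAlgebra.ι ℂ (PGen.v i))
    let z : A := RingQuot.mkAlgHom ℂ (PRel n hn) (FreeAlgebra.ι ℂ (PGen.z))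
    let en : A := e ⟨n - 1, by omega⟩
    let corner : A →ₗ[ℂ] A := LinearMap.mulLeft ℂ en ∘ₗ LinearMap.mulRight ℂ en
    (∀ u w : A, u ∈ LinearMap.range corner → w ∈ LinearMap.range corner → u * w = w * u) ∧
    (∃ ψ : Polynomial ℂ →ₗ[ℂ] A,
      (∀ p q : Polynomial ℂ, ψ (p * q) = ψ p * ψ q) ∧
      ψ 1 = en ∧ ψ Polynomial.X = z * en ∧
      LinearMap.range ψ = LinearMap.range corner ∧
      LinearMap.ker ψ
        = Submodule.restrictScalars ℂ (Ideal.span {Polynomial.X ^ n})) ∧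
    Module.finrank ℂ ↥(LinearMap.range corner) = n := by
  intro A e z en corner
  have hen : en = CEPA.e hn (n - 1) := by rw [← CEPA.gen_v ⟨n - 1, by omega⟩]
  have hcorner : corner = CEPA.corner hn := by
    show LinearMap.mulLeft ℂ en ∘ₗ LinearMap.mulRight ℂ en = _
    rw [hen]
    rfl
  clear_value corner en
  subst hcorner hen
  refine ⟨?_, ⟨CEPA.cornerPoly hn, CEPA.cornerPoly_mul, ?_, ?_, CEPA.range_cornerPoly,
    CEPA.ker_cornerPoly⟩, ?_⟩
  · rintro u w hu hw
    rw [← CEPA.range_cornerPoly] at hu hw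
    obtain ⟨p, rfl⟩ := hu
    obtain ⟨q, rfl⟩ := hw
    rw [← CEPA.cornerPoly_mul, mul_comm, CEPA.cornerPoly_mul]
  · rw [CEPA.cornerPoly_apply, map_one, one_mul]
  · rw [CEPA.cornerPoly_apply, Polynomial.aeval_X]
    rfl
  · rw [← CEPA.range_cornerPoly, CEPA.finrank_range_cornerPoly]
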